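/- arXiv:2201.02439 — 3 statements merged into one kernel-verified Lean document; each statement's English description precedes it below -/
import Mathlib

section
/- Let A, B be bounded selfadjoint operators on a complex Hilbert space H. If I_≥(A,B) = {λ₀} is a singleton, then B is indefinite and I_>(A,B) is empty. -/
/-!
Write `q_ρ(x) = qf A x + ρ * qf B x` for the quadratic form of `A + ρ B`. If `qf B` had a
constant sign, moving `λ₀` by one in the direction of that sign would keep `q_ρ ≥ 0`, so
`I_≥(A,B)` would contain a second point. If `A + ρ B ≥ α` for some `α > 0`, then the
perturbation `|σ - ρ| ‖B‖ ‖x‖²` is absorbed by `α ‖x‖²` for `σ` close to `ρ`, so `I_≥(A,B)`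
contains a neighbourhood of `ρ`; a singleton contains none.
-/

open scoped InnerProductSpace

noncomputable section

variable {H : Type*} [NormedAddCommGroup H] [InnerProductSpace ℂ H] [CompleteSpace H]

/-- The (real) quadratic form associated to an operator. -/
def qf (T : H →L[ℂ] H) (x : H) : ℝ := (⟪T x, x⟫_ℂ).re

/-- Positive semidefinite operator. -/
def PosSemidef (T : H →L[ℂ] H) : Prop := ∀ x, 0 ≤ qf T x

/-- Positive definite operator (uniformly positive). -/
def PosDef (T : H →L[ℂ] H) : Prop := ∃ α > 0, ∀ x, α * ‖x‖ ^ 2 ≤ qf T x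

/-- The set of parameters where the pencil `A + ρ B` is positive semidefinite. -/
def Ige (A B : H →L[ℂ] H) : Set ℝ := {ρ | PosSemidef (A + (ρ : ℂ) • B)}

/-- The set of parameters where the pencil `A + ρ B` is positive definite. -/
def Igt (A B : H →L[ℂ] H) : Set ℝ := {ρ | PosDef (A + (ρ : ℂ) • B)}

/-- An operator is indefinite if its quadratic form takes both signs. -/
def Indefinite (T : H →L[ℂ] H) : Prop := (∃ x, 0 < qf T x) ∧ (∃ x, qf T x < 0)

section

omit [CompleteSpace H]

lemma qf_add_ofReal_smul (A B : H →L[ℂ] H) (ρ : ℝ) (x : H) :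
    qf (A + (ρ : ℂ) • B) x = qf A x + ρ * qf B x := by
  simp only [qf, add_apply, FunLike.coe_smul,
    Pi.smul_apply, inner_add_left, inner_smul_left, Complex.add_re, Complex.mul_re,
    Complex.conj_ofReal, Complex.ofReal_re, Complex.ofReal_im]
  ring

lemma abs_qf_le (T : H →L[ℂ] H) (x : H) : |qf T x| ≤ ‖T‖ * ‖x‖ ^ 2 :=
  calc |qf T x| ≤ ‖⟪T x, x⟫_ℂ‖ := Complex.abs_re_le_norm _
    _ ≤ ‖T x‖ * ‖x‖ := norm_inner_le_norm _ _
    _ ≤ ‖T‖ * ‖x‖ * ‖x‖ := by gcongr; exact T.le_opNorm x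
    _ = ‖T‖ * ‖x‖ ^ 2 := by ring

lemma add_mem_Ige {A B : H →L[ℂ] H} {ρ t : ℝ} (hρ : ρ ∈ Ige A B)
    (ht : ∀ x, 0 ≤ t * qf B x) : ρ + t ∈ Ige A B := by
  intro x
  have hx := hρ x
  rw [qf_add_ofReal_smul] at hx ⊢
  linarith [ht x]

lemma Igt_subset_interior_Ige (A B : H →L[ℂ] H) : Igt A B ⊆ interior (Ige A B) := by
  rintro ρ ⟨α, hα, hρ⟩
  rw [mem_interior_iff_mem_nhds, Metric.mem_nhds_iff]
  refine ⟨α / (‖B‖ + 1), by positivity, fun σ hσ x => ?_⟩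
  have hdist : |σ - ρ| * ‖B‖ ≤ α := by
    rw [Metric.mem_ball, Real.dist_eq, lt_div_iff₀ (by positivity)] at hσ
    nlinarith [abs_nonneg (σ - ρ), norm_nonneg B]
  have hperturb : |(σ - ρ) * qf B x| ≤ α * ‖x‖ ^ 2 :=
    calc |(σ - ρ) * qf B x| ≤ |σ - ρ| * (‖B‖ * ‖x‖ ^ 2) := by
          rw [abs_mul]; gcongr; exact abs_qf_le B x
      _ = |σ - ρ| * ‖B‖ * ‖x‖ ^ 2 := by ring
      _ ≤ α * ‖x‖ ^ 2 := by gcongr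
  have hx := hρ x
  rw [qf_add_ofReal_smul] at hx ⊢
  nlinarith [neg_abs_le ((σ - ρ) * qf B x)]

end

theorem stmt5_general (A B : H →L[ℂ] H)
    (l0 : ℝ) (hsing : Ige A B = {l0}) :
    Indefinite B ∧ Igt A B = ∅ := by
  have hl0 : l0 ∈ Ige A B := hsing ▸ rfl
  have not_sign_definite : ∀ t : ℝ, t ≠ 0 → ¬ ∀ x, 0 ≤ t * qf B x := fun t ht hB => by
    have := add_mem_Ige hl0 hB
    rw [hsing, Set.mem_singleton_iff] at this
    exact ht (by linarith)
  refine ⟨⟨?_, ?_⟩, ?_⟩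
  · by_contra! h
    exact not_sign_definite (-1) (by norm_num) fun x => by linarith [h x]
  · by_contra! h
    exact not_sign_definite 1 one_ne_zero fun x => by linarith [h x]
  · simpa [hsing, interior_singleton] using Igt_subset_interior_Ige A B

theorem stmt5 (A B : H →L[ℂ] H) (hA : IsSelfAdjoint A) (hB : IsSelfAdjoint B)
    (l0 : ℝ) (hsing : Ige A B = {l0}) :
    Indefinite B ∧ Igt A B = ∅ :=
  stmt5_general A B l0 hsing
end
end

section
/- Let A, B be bounded selfadjoint operators on a complex Hilbert space H with B indefinite, and assume I_≥(A,B) = [λ₋, λ₊] with λ₋ < λ₊. Then for every λ ∈ (λ₋, λ₊), the range of (A + λ₋B)^{1/2} and the range of (A + λ₊B)^{1/2} are both contained in the range of (A + λB)^{1/2}. -/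
open scoped InnerProductSpace

noncomputable section

variable {H : Type*} [NormedAddCommGroup H] [InnerProductSpace ℂ H] [CompleteSpace H]

/-!
Since `ρ ↦ A + ρB` is affine, for `λ₋ < λ < λ₊` and `c = (λ₊ - λ₋)/(λ₊ - λ)` the operator
`c (A + λB) - (A + λ₋B)` is the nonnegative multiple `(λ - λ₋)/(λ₊ - λ)` of `A + λ₊B ≥ 0`;
symmetrically with the roles of `λ₋` and `λ₊` exchanged. Douglas' lemma turns such a form
domination `0 ≤ T ≤ c S` into `ran T^{1/2} ⊆ ran S^{1/2}`: from `‖T^{1/2} x‖ ≤ √c ‖S^{1/2} x‖`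
the functional `x ↦ ⟪T^{1/2} u, x⟫` factors boundedly through `S^{1/2}`, and its Riesz
representative `z` satisfies `S^{1/2} z = T^{1/2} u`.
-/

open ContinuousLinearMap
open scoped InnerProduct

theorem LinearMap.exists_strongDual_comp_eq_of_norm_le {𝕜 E F : Type*} [RCLike 𝕜]
    [AddCommGroup E] [Module 𝕜 E] [NormedAddCommGroup F] [NormedSpace 𝕜 F]
    (f : E →ₗ[𝕜] F) (ψ : E →ₗ[𝕜] 𝕜) (M : ℝ) (h : ∀ x, ‖ψ x‖ ≤ M * ‖f x‖) :
    ∃ G : StrongDual 𝕜 F, ∀ x, G (f x) = ψ x := by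
  have hker : LinearMap.ker f ≤ LinearMap.ker ψ := fun x hx ↦ by
    simpa [LinearMap.mem_ker.mp hx] using h x
  set φ : LinearMap.range f →ₗ[𝕜] 𝕜 :=
    (LinearMap.ker f).liftQ ψ hker ∘ₗ f.quotKerEquivRange.symm.toLinearMap
  have hφ : ∀ x, φ ⟨f x, LinearMap.mem_range_self f x⟩ = ψ x := fun x ↦ by simp [φ]
  have hφM : ∀ w, ‖φ w‖ ≤ M * ‖w‖ := by
    rintro ⟨_, x, rfl⟩
    simpa [hφ] using h x
  obtain ⟨G, hG, -⟩ := exists_extension_norm_eq _ (φ.mkContinuous M hφM)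
  exact ⟨G, fun x ↦ (hG _).trans (hφ x)⟩

theorem ContinuousLinearMap.range_le_range_of_norm_adjoint_le {𝕜 E F G : Type*} [RCLike 𝕜]
    [NormedAddCommGroup E] [InnerProductSpace 𝕜 E] [CompleteSpace E]
    [NormedAddCommGroup F] [InnerProductSpace 𝕜 F] [CompleteSpace F]
    [NormedAddCommGroup G] [InnerProductSpace 𝕜 G] [CompleteSpace G]
    {f : E →L[𝕜] G} {g : F →L[𝕜] G} (C : ℝ) (h : ∀ x, ‖(g†) x‖ ≤ C * ‖(f†) x‖) :
    LinearMap.range (g : F →ₗ[𝕜] G) ≤ LinearMap.range (f : E →ₗ[𝕜] G) := by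
  rintro _ ⟨u, rfl⟩
  obtain ⟨Φ, hΦ⟩ := LinearMap.exists_strongDual_comp_eq_of_norm_le (f† : G →ₗ[𝕜] E)
    (innerₛₗ 𝕜 (g u)) (C * ‖u‖) fun x ↦
      calc ‖⟪g u, x⟫_𝕜‖ = ‖⟪u, (g†) x⟫_𝕜‖ := by rw [adjoint_inner_right]
        _ ≤ ‖u‖ * ‖(g†) x‖ := norm_inner_le_norm _ _
        _ ≤ ‖u‖ * (C * ‖(f†) x‖) := by gcongr; exact h x
        _ = C * ‖u‖ * ‖(f†) x‖ := by ring
  refine ⟨(InnerProductSpace.toDual 𝕜 E).symm Φ, ext_inner_right 𝕜 fun x ↦ ?_⟩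
  change ⟪f _, x⟫_𝕜 = ⟪g u, x⟫_𝕜
  rw [← adjoint_inner_right, InnerProductSpace.toDual_symm_apply]
  exact hΦ x

section QuadraticForm

variable {E : Type*} [NormedAddCommGroup E] [InnerProductSpace ℂ E]

theorem qf_add_smul (A B : E →L[ℂ] E) (ρ : ℝ) (x : E) :
    qf (A + (ρ : ℂ) • B) x = qf A x + ρ * qf B x := by
  simp [qf]

-- `(τ - ρ)/(τ - σ) (A + σB) - (A + ρB) = (σ - ρ)/(τ - σ) (A + τB)`
theorem qf_add_smul_le_mul_of_posSemidef {A B : E →L[ℂ] E} {ρ σ τ : ℝ} (hστ : σ ≠ τ)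
    (hσ : 0 ≤ (σ - ρ) / (τ - σ)) (hτ : PosSemidef (A + (τ : ℂ) • B)) (x : E) :
    qf (A + (ρ : ℂ) • B) x ≤ (τ - ρ) / (τ - σ) * qf (A + (σ : ℂ) • B) x := by
  have hτx := hτ x
  rw [qf_add_smul] at hτx ⊢
  rw [qf_add_smul]
  have key : (τ - ρ) / (τ - σ) * (qf A x + σ * qf B x) - (qf A x + ρ * qf B x)
      = (σ - ρ) / (τ - σ) * (qf A x + τ * qf B x) := by
    field_simp [sub_ne_zero.mpr hστ.symm]
    ring
  linarith [mul_nonneg hσ hτx]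

end QuadraticForm

theorem norm_sqrt_apply_sq {T : H →L[ℂ] H} (hT : 0 ≤ T) (x : H) :
    ‖CFC.sqrt T x‖ ^ 2 = qf T x := by
  rw [apply_norm_sq_eq_inner_adjoint_left, (CFC.sqrt_nonneg T).isSelfAdjoint.adjoint_eq,
    ← mul_def, CFC.sqrt_mul_sqrt_self T hT]
  rfl

theorem range_sqrt_le_range_sqrt {S T : H →L[ℂ] H} (hS : 0 ≤ S) (hT : 0 ≤ T) (c : ℝ)
    (h : ∀ x, qf T x ≤ c * qf S x) :
    LinearMap.range ((CFC.sqrt T : H →L[ℂ] H) : H →ₗ[ℂ] H)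
      ≤ LinearMap.range ((CFC.sqrt S : H →L[ℂ] H) : H →ₗ[ℂ] H) := by
  refine range_le_range_of_norm_adjoint_le (√c) fun x ↦ ?_
  rw [(CFC.sqrt_nonneg T).isSelfAdjoint.adjoint_eq, (CFC.sqrt_nonneg S).isSelfAdjoint.adjoint_eq,
    ← Real.sqrt_sq (norm_nonneg (CFC.sqrt T x)), ← Real.sqrt_sq (norm_nonneg (CFC.sqrt S x)),
    ← Real.sqrt_mul' _ (sq_nonneg _), norm_sqrt_apply_sq hT, norm_sqrt_apply_sq hS]
  exact Real.sqrt_le_sqrt (h x)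

theorem nonneg_of_posSemidef {T : H →L[ℂ] H} (hT : IsSelfAdjoint T) (h : PosSemidef T) :
    0 ≤ T :=
  (nonneg_iff_isPositive T).mpr (isPositive_def'.mpr ⟨hT, h⟩)

theorem isSelfAdjoint_add_ofReal_smul {A B : H →L[ℂ] H} (hA : IsSelfAdjoint A)
    (hB : IsSelfAdjoint B) (ρ : ℝ) : IsSelfAdjoint (A + (ρ : ℂ) • B) :=
  hA.add (IsSelfAdjoint.smul (Complex.conj_ofReal ρ) hB)

theorem stmt11_general (A B : H →L[ℂ] H) (hA : IsSelfAdjoint A) (hB : IsSelfAdjoint B)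
    (lm lp : ℝ) (hI : Ige A B = Set.Icc lm lp) :
    ∀ l ∈ Set.Ioo lm lp,
      LinearMap.range ((CFC.sqrt (A + (lm : ℂ) • B) : H →L[ℂ] H) : H →ₗ[ℂ] H)
          ≤ LinearMap.range ((CFC.sqrt (A + (l : ℂ) • B) : H →L[ℂ] H) : H →ₗ[ℂ] H) ∧
      LinearMap.range ((CFC.sqrt (A + (lp : ℂ) • B) : H →L[ℂ] H) : H →ₗ[ℂ] H)
          ≤ LinearMap.range ((CFC.sqrt (A + (l : ℂ) • B) : H →L[ℂ] H) : H →ₗ[ℂ] H) := by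
  rintro l ⟨hlm, hlp⟩
  have hle : lm ≤ lp := (hlm.trans hlp).le
  have hpsd : ∀ ρ ∈ Set.Icc lm lp, PosSemidef (A + (ρ : ℂ) • B) := fun ρ hρ ↦ hI.ge hρ
  have hnonneg : 0 ≤ A + (l : ℂ) • B :=
    nonneg_of_posSemidef (isSelfAdjoint_add_ofReal_smul hA hB l) (hpsd l ⟨hlm.le, hlp.le⟩)
  have hm := hpsd lm (Set.left_mem_Icc.mpr hle)
  have hp := hpsd lp (Set.right_mem_Icc.mpr hle)
  exact ⟨range_sqrt_le_range_sqrt hnonneg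
      (nonneg_of_posSemidef (isSelfAdjoint_add_ofReal_smul hA hB lm) hm) _
      (qf_add_smul_le_mul_of_posSemidef hlp.ne (div_nonneg (by linarith) (by linarith)) hp),
    range_sqrt_le_range_sqrt hnonneg
      (nonneg_of_posSemidef (isSelfAdjoint_add_ofReal_smul hA hB lp) hp) _
      (qf_add_smul_le_mul_of_posSemidef hlm.ne' (div_nonneg_of_nonpos (by linarith) (by linarith))
        hm)⟩

theorem stmt11 (A B : H →L[ℂ] H) (hA : IsSelfAdjoint A) (hB : IsSelfAdjoint B)
    (hBind : Indefinite B)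
    (lm lp : ℝ) (hlt : lm < lp) (hI : Ige A B = Set.Icc lm lp) :
    ∀ l ∈ Set.Ioo lm lp,
      LinearMap.range ((CFC.sqrt (A + (lm : ℂ) • B) : H →L[ℂ] H) : H →ₗ[ℂ] H)
          ≤ LinearMap.range ((CFC.sqrt (A + (l : ℂ) • B) : H →L[ℂ] H) : H →ₗ[ℂ] H) ∧
      LinearMap.range ((CFC.sqrt (A + (lp : ℂ) • B) : H →L[ℂ] H) : H →ₗ[ℂ] H)
          ≤ LinearMap.range ((CFC.sqrt (A + (l : ℂ) • B) : H →L[ℂ] H) : H →ₗ[ℂ] H) :=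
  stmt11_general A B hA hB lm lp hI
end
end

section
/- Let A, B be bounded selfadjoint operators on a complex Hilbert space H with B indefinite, and assume I_≥(A,B) = [λ₋, λ₊] with λ₋ ≤ λ₊. Then I_>(A,B) is nonempty if and only if there exists α > 0 such that ⟨Ax, x⟩ ≥ α‖x‖² for every x ∈ H with ⟨Bx, x⟩ = 0. -/
/-!
Finsler's lemma, applied to `A - α • 1`. If `qf B x > 0 > qf B y`, take `c` with
`‖c‖ ^ 2 = qf B x / -qf B y` and phase chosen to kill the cross term of `qf B`: then `x + c • y`
and `x - c • y` are both `B`-neutral, and adding `qf T (x ± c • y) ≥ 0` cancels the cross terms of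
`qf T`. Hence every ratio `-qf T x / qf B x` is at most every ratio `qf T y / -qf B y`, and any `ρ`
between them (the supremum of the former) makes `T + ρ • B` positive semidefinite, so that
`A + ρ • B ≥ α`.
-/

open scoped InnerProductSpace

noncomputable section

variable {H : Type*} [NormedAddCommGroup H] [InnerProductSpace ℂ H] [CompleteSpace H]

lemma Complex.exists_norm_eq_and_re_mul_eq_zero {r : ℝ} (hr : 0 ≤ r) (w : ℂ) :
    ∃ c : ℂ, ‖c‖ = r ∧ (c * w).re = 0 := by
  refine ⟨r * I * exp (-w.arg * I), ?_, ?_⟩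
  · rw [norm_mul, norm_mul, ← ofReal_neg, norm_exp_ofReal_mul_I]
    simp [abs_of_nonneg hr]
  · have hw : w = ‖w‖ * exp (w.arg * I) := (norm_mul_exp_arg_mul_I w).symm
    set θ := w.arg
    have : r * I * exp (-θ * I) * w = (r * ‖w‖ : ℝ) * I := by
      conv_lhs => rw [hw]
      rw [mul_mul_mul_comm, ← exp_add, neg_mul, neg_add_cancel, exp_zero]
      push_cast
      ring
    rw [this]
    simp

section

variable {E : Type*} [NormedAddCommGroup E] [InnerProductSpace ℂ E]

lemma qf_add (S T : E →L[ℂ] E) (x : E) : qf (S + T) x = qf S x + qf T x := by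
  simp [qf]

lemma qf_sub (S T : E →L[ℂ] E) (x : E) : qf (S - T) x = qf S x - qf T x := by
  simp [qf]

lemma qf_ofReal_smul (ρ : ℝ) (T : E →L[ℂ] E) (x : E) : qf ((ρ : ℂ) • T) x = ρ * qf T x := by
  simp [qf]

lemma qf_one (x : E) : qf (1 : E →L[ℂ] E) x = ‖x‖ ^ 2 := by
  simp [qf, ← inner_self_eq_norm_sq (𝕜 := ℂ)]

lemma qf_add_smul_s13 (T : E →L[ℂ] E) (x y : E) (c : ℂ) :
    qf T (x + c • y) =
      qf T x + ‖c‖ ^ 2 * qf T y + (c * (⟪T x, y⟫_ℂ + starRingEnd ℂ ⟪T y, x⟫_ℂ)).re := by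
  simp only [qf, map_add, map_smul, inner_add_left, inner_add_right, inner_smul_left,
    inner_smul_right]
  rw [Complex.sq_norm, Complex.normSq_apply]
  simp only [Complex.add_re, Complex.add_im, Complex.mul_re, Complex.mul_im, Complex.conj_re,
    Complex.conj_im]
  ring

variable {T B : E →L[ℂ] E}

lemma neg_qf_div_le_qf_div_neg (hT : ∀ z, qf B z = 0 → 0 ≤ qf T z) {x y : E}
    (hx : 0 < qf B x) (hy : qf B y < 0) : -qf T x / qf B x ≤ qf T y / -qf B y := by
  have hy' : 0 < -qf B y := neg_pos.2 hy
  have hy0 : qf B y ≠ 0 := hy.ne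
  obtain ⟨c, hc, hre⟩ := Complex.exists_norm_eq_and_re_mul_eq_zero
    (Real.sqrt_nonneg (qf B x / -qf B y)) (⟪B x, y⟫_ℂ + starRingEnd ℂ ⟪B y, x⟫_ℂ)
  have hc2 : ‖c‖ ^ 2 = qf B x / -qf B y := by
    rw [hc, Real.sq_sqrt (div_nonneg hx.le hy'.le)]
  have hpos : 0 ≤ qf T (x + c • y) := hT _ <| by
    rw [qf_add_smul_s13, hre, hc2]
    field_simp
    ring
  have hneg : 0 ≤ qf T (x + (-c) • y) := hT _ <| by
    rw [qf_add_smul_s13, norm_neg, neg_mul, Complex.neg_re, hre, hc2]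
    field_simp
    ring
  rw [qf_add_smul_s13, hc2] at hpos
  rw [qf_add_smul_s13, norm_neg, neg_mul, Complex.neg_re, hc2] at hneg
  rw [div_le_div_iff₀ hx hy']
  have hsum : 0 ≤ qf T x + qf B x / -qf B y * qf T y := by linarith
  have hcancel : qf B x / -qf B y * qf T y * -qf B y = qf B x * qf T y := by field_simp
  linarith [mul_nonneg hsum hy'.le]

theorem exists_posSemidef_add_smul_of_indefinite (hB : Indefinite B)
    (hT : ∀ z, qf B z = 0 → 0 ≤ qf T z) : ∃ ρ : ℝ, PosSemidef (T + (ρ : ℂ) • B) := by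
  obtain ⟨⟨x₀, hx₀⟩, ⟨y₀, hy₀⟩⟩ := hB
  set L : Set ℝ := (fun x ↦ -qf T x / qf B x) '' {x | 0 < qf B x}
  have hL : L.Nonempty := ⟨_, x₀, hx₀, rfl⟩
  have hLle : ∀ y, qf B y < 0 → ∀ ρ ∈ L, ρ ≤ qf T y / -qf B y := by
    rintro y hy _ ⟨x, hx, rfl⟩
    exact neg_qf_div_le_qf_div_neg hT hx hy
  refine ⟨sSup L, fun z ↦ ?_⟩
  rw [qf_add, qf_ofReal_smul]
  rcases lt_trichotomy (qf B z) 0 with hz | hz | hz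
  · have := csSup_le hL (hLle z hz)
    rw [le_div_iff₀ (neg_pos.2 hz)] at this
    linarith
  · rw [hz, mul_zero, add_zero]
    exact hT z hz
  · have := le_csSup ⟨_, hLle y₀ hy₀⟩ (Set.mem_image_of_mem _ hz)
    rw [div_le_iff₀ hz] at this
    linarith

end

theorem stmt13_general (A B : H →L[ℂ] H)
    (hBind : Indefinite B) :
    (Igt A B).Nonempty ↔ ∃ α > 0, ∀ x : H, qf B x = 0 → α * ‖x‖ ^ 2 ≤ qf A x := by
  constructor
  · rintro ⟨ρ, α, hα, hρ⟩
    refine ⟨α, hα, fun x hx ↦ ?_⟩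
    have := hρ x
    rwa [qf_add, qf_ofReal_smul, hx, mul_zero, add_zero] at this
  · rintro ⟨α, hα, hA⟩
    obtain ⟨ρ, hρ⟩ := exists_posSemidef_add_smul_of_indefinite (T := A - (α : ℂ) • 1) hBind
      fun z hz ↦ by rw [qf_sub, qf_ofReal_smul, qf_one, sub_nonneg]; exact hA z hz
    refine ⟨ρ, α, hα, fun x ↦ ?_⟩
    have := hρ x
    simp only [qf_add, qf_sub, qf_ofReal_smul, qf_one] at this ⊢
    linarith

theorem stmt13 (A B : H →L[ℂ] H) (hA : IsSelfAdjoint A) (hB : IsSelfAdjoint B)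
    (hBind : Indefinite B)
    (lm lp : ℝ) (hle : lm ≤ lp) (hI : Ige A B = Set.Icc lm lp) :
    (Igt A B).Nonempty ↔ ∃ α > 0, ∀ x : H, qf B x = 0 → α * ‖x‖ ^ 2 ≤ qf A x :=
  stmt13_general A B hBind
end
end
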